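/- arXiv:0801.3094 — 2 statements merged into one kernel-verified Lean document; each statement's English description precedes it below -/
import Mathlib

section
/- There exists a constant c₂ > 1 with the following property. For each odd integer p ≥ 3 let n(p) be any natural number with n(p) < c₂·log₂ p. Then ‖Q_{n(p),p} − U‖ → 1 as p → ∞ along odd integers; that is, for every δ > 0 there exists P₀ such that for every odd p ≥ P₀ one has ‖Q_{n(p),p} − U‖ > 1 − δ. -/
open MeasureTheory

/-- `ν` is the infinite product over `ℕ` of the probability measure on `{0,1} ⊆ ℤ`
assigning probability `2/5` to `1` and `3/5` to `0`: it is characterized by its values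
on cylinder sets, namely the probability that the first `n` coordinates take prescribed
values `c 0, …, c (n-1)` is `∏_{i<n} (2/5 if c i = 1, 3/5 if c i = 0, else 0)`.
(Taking `n = 0` shows `ν` is a probability measure.) -/
def IsBiasedProductMeasure (ν : Measure (ℕ → ℤ)) : Prop :=
  ∀ (n : ℕ) (c : ℕ → ℤ),
    ν {ω : ℕ → ℤ | ∀ i < n, ω i = c i} =
      ∏ i ∈ Finset.range n,
        (if c i = 1 then (2 / 5 : ENNReal) else if c i = 0 then (3 / 5 : ENNReal) else 0)

/-- `X n ω = ∑_{i=0}^{n-1} 2^(n-1-i) ω i`, the position after `n` steps of the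
process (before reduction mod `p`). -/
def cdgX (n : ℕ) (ω : ℕ → ℤ) : ℤ := ∑ i ∈ Finset.range n, 2 ^ (n - 1 - i) * ω i

/-- The total variation distance `‖Q_{n,p} − U‖ = (1/2) ∑_{s ∈ ℤ/pℤ} |Q_{n,p}(s) − 1/p|`,
where `Q_{n,p}(s) = ν {ω | X_n(ω) ≡ s (mod p)}` (the sum over `ℤ/pℤ` is written as a
sum over `s ∈ {0, …, p-1}`, each residue occurring exactly once). -/
noncomputable def cdgTV (ν : Measure (ℕ → ℤ)) (n p : ℕ) : ℝ :=
  (1 / 2) * ∑ s ∈ Finset.range p,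
    |(ν {ω : ℕ → ℤ | ((cdgX n ω : ZMod p)) = (s : ZMod p)}).toReal - 1 / (p : ℝ)|

/-!
`Q_{n,p}` is the image of the law of the first `n` bits under `b ↦ X_n mod p`. Hence for any set
`T` of bit strings, the set `A` of residues it hits has `Q(A) ≥ P(T)` and `|A| ≤ |T|`, and
`‖Q − U‖ ≥ Q(A) − |A|/p ≥ P(T) − |T|/p`. For bounded `n` take all `2ⁿ` strings. Otherwise take the
strings with at most `9n/20` ones: by Chernoff bounds `P(T) ≥ 1 − rⁿ` with `r < 1` and
`|T| ≤ Bⁿ` with `log₂ B < 200/201`, so `n < (201/200) log₂ p` gives `|T|/p ≤ p^(θ-1)` with `θ < 1`.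
-/

open Finset

noncomputable section

def binomialWeight (q : ℝ) (n : ℕ) (S : Finset ℕ) : ℝ := q ^ #S * (1 - q) ^ (n - #S)

lemma binomialWeight_nonneg {q : ℝ} (hq₀ : 0 ≤ q) (hq₁ : q ≤ 1) (n : ℕ) (S : Finset ℕ) :
    0 ≤ binomialWeight q n S := by
  unfold binomialWeight
  have : 0 ≤ 1 - q := by linarith
  positivity

lemma sum_binomialWeight_mul_pow (q t : ℝ) (n : ℕ) :
    ∑ S ∈ (range n).powerset, binomialWeight q n S * t ^ #S = (q * t + (1 - q)) ^ n := by
  simpa [binomialWeight, mul_pow, mul_right_comm] using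
    sum_pow_mul_eq_add_pow (q * t) (1 - q) (range n)

lemma sum_binomialWeight (q : ℝ) (n : ℕ) :
    ∑ S ∈ (range n).powerset, binomialWeight q n S = 1 := by
  simpa using sum_binomialWeight_mul_pow q 1 n

lemma sum_binomialWeight_filter_lt_le {q t : ℝ} (hq₀ : 0 ≤ q) (hq₁ : q ≤ 1) (ht : 1 ≤ t)
    (n : ℕ) (k : ℝ) :
    ∑ S ∈ (range n).powerset with k < #S, binomialWeight q n S ≤
      (q * t + (1 - q)) ^ n / t ^ k := by
  have ht₀ : 0 < t ^ k := Real.rpow_pos_of_pos (by linarith) k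
  rw [le_div_iff₀ ht₀, sum_mul, ← sum_binomialWeight_mul_pow]
  calc ∑ S ∈ (range n).powerset with k < #S, binomialWeight q n S * t ^ k
      ≤ ∑ S ∈ (range n).powerset with k < #S, binomialWeight q n S * t ^ #S := by
        gcongr with S hS
        · exact binomialWeight_nonneg hq₀ hq₁ n S
        · rw [← Real.rpow_natCast]
          exact Real.rpow_le_rpow_of_exponent_le ht (mem_filter.1 hS).2.le
    _ ≤ _ := sum_le_sum_of_subset_of_nonneg (filter_subset _ _) fun S _ _ =>
        mul_nonneg (binomialWeight_nonneg hq₀ hq₁ n S) (by positivity)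

lemma card_filter_card_le_le {s : ℝ} (hs : 1 ≤ s) (n : ℕ) (k : ℝ) :
    (#{S ∈ (range n).powerset | (#S : ℝ) ≤ k} : ℝ) ≤ s ^ k * (s⁻¹ + 1) ^ n := by
  have hs₀ : 0 < s := by linarith
  have hsum := sum_pow_mul_eq_add_pow s⁻¹ 1 (range n)
  simp only [one_pow, mul_one, card_range] at hsum
  rw [← hsum, mul_sum, card_eq_sum_ones, Nat.cast_sum]
  calc ∑ S ∈ (range n).powerset with (#S : ℝ) ≤ k, ((1 : ℕ) : ℝ)
      ≤ ∑ S ∈ (range n).powerset with (#S : ℝ) ≤ k, s ^ k * s⁻¹ ^ #S := by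
        gcongr with S hS
        rw [inv_pow, Nat.cast_one, le_mul_inv_iff₀ (by positivity), one_mul, ← Real.rpow_natCast]
        exact Real.rpow_le_rpow_of_exponent_le hs (mem_filter.1 hS).2
    _ ≤ _ := sum_le_sum_of_subset_of_nonneg (filter_subset _ _) fun S _ _ => by positivity

/-- A finite set `S ⊆ range n` encodes the bits `b i = 1 ↔ i ∈ S`. -/
def bitPath (S : Finset ℕ) : ℕ → ℤ := fun i => if i ∈ S then 1 else 0

def bitCylinder (n : ℕ) (S : Finset ℕ) : Set (ℕ → ℤ) := {ω | ∀ i < n, ω i = bitPath S i}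

def residueSet (n p s : ℕ) : Set (ℕ → ℤ) := {ω | (cdgX n ω : ZMod p) = s}

lemma measurableSet_bitCylinder (n : ℕ) (S : Finset ℕ) : MeasurableSet (bitCylinder n S) := by
  simp only [bitCylinder, Set.ofPred_forall]
  exact .iInter fun i => .iInter fun _ =>
    measurableSet_eq_fun (measurable_pi_apply i) measurable_const

lemma pairwiseDisjoint_bitCylinder (n : ℕ) :
    ((range n).powerset : Set (Finset ℕ)).PairwiseDisjoint (bitCylinder n) := by
  intro S hS S' hS' hne
  obtain ⟨i, hi⟩ : ∃ i, ¬(i ∈ S ↔ i ∈ S') := by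
    by_contra! h
    exact hne (Finset.ext h)
  have hin : i < n := by
    simp only [coe_powerset, Set.mem_preimage, Set.mem_powerset_iff, coe_subset] at hS hS'
    by_cases h : i ∈ S
    · exact mem_range.1 (hS h)
    · exact mem_range.1 (hS' (by tauto))
  refine Set.disjoint_left.2 fun ω hω hω' => hi ?_
  have := (hω i hin).symm.trans (hω' i hin)
  by_cases h : i ∈ S <;> by_cases h' : i ∈ S' <;> simp_all [bitPath]

lemma cdgX_eq_of_mem_bitCylinder {n : ℕ} {S : Finset ℕ} {ω : ℕ → ℤ} (hω : ω ∈ bitCylinder n S) :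
    cdgX n ω = cdgX n (bitPath S) :=
  sum_congr rfl fun i hi => by rw [hω i (mem_range.1 hi)]

lemma measurableSet_residueSet (n p s : ℕ) : MeasurableSet (residueSet n p s) :=
  (measurable_of_countable _).comp
    (Finset.measurable_sum _ fun i _ => (measurable_pi_apply i).const_mul _)
    (measurableSet_singleton _)

lemma pairwiseDisjoint_residueSet (n p : ℕ) :
    (range p : Set ℕ).PairwiseDisjoint (residueSet n p) := by
  intro s hs t ht hst
  refine Set.disjoint_left.2 fun ω h₁ h₂ => hst ?_
  have : (s : ZMod p) = t := h₁.symm.trans h₂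
  simpa [ZMod.natCast_eq_natCast_iff', Nat.mod_eq_of_lt (mem_range.1 hs),
    Nat.mod_eq_of_lt (mem_range.1 ht)] using this

namespace IsBiasedProductMeasure

variable {ν : Measure (ℕ → ℤ)}

lemma isProbabilityMeasure (hν : IsBiasedProductMeasure ν) : IsProbabilityMeasure ν :=
  ⟨by simpa using hν 0 0⟩

lemma measureReal_bitCylinder (hν : IsBiasedProductMeasure ν) {n : ℕ} {S : Finset ℕ}
    (hS : S ⊆ range n) : ν.real (bitCylinder n S) = binomialWeight (2 / 5) n S := by
  have hprod :
      ν (bitCylinder n S) = ∏ i ∈ range n, if i ∈ S then (2 / 5 : ENNReal) else 3 / 5 := by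
    rw [bitCylinder, hν n]
    exact prod_congr rfl fun i _ => by by_cases h : i ∈ S <;> simp [bitPath, h]
  rw [measureReal_def, hprod, prod_ite, prod_const, prod_const, filter_mem_eq_inter,
    inter_eq_right.2 hS, filter_not, filter_mem_eq_inter, inter_eq_right.2 hS,
    card_sdiff_of_subset hS, card_range, binomialWeight]
  simp only [ENNReal.toReal_mul, ENNReal.toReal_pow, ENNReal.toReal_div, ENNReal.toReal_ofNat]
  norm_num

end IsBiasedProductMeasure

lemma sum_sub_card_div_le_half_sum_abs_sub {α : Type*} [DecidableEq α] (U A : Finset α)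
    (Q : α → ℝ) (hQ : ∑ s ∈ U, Q s ≤ 1) (hA : A ⊆ U) :
    ∑ s ∈ A, Q s - #A / #U ≤ 1 / 2 * ∑ s ∈ U, |Q s - 1 / #U| := by
  rcases U.eq_empty_or_nonempty with rfl | hU
  · simp [subset_empty.1 hA]
  have hU₀ : (0 : ℝ) < #U := by exact_mod_cast hU.card_pos
  have hout : ∑ s ∈ U \ A, (1 / #U - Q s) ≤ ∑ s ∈ U \ A, |Q s - 1 / #U| :=
    sum_le_sum fun s _ => by rw [abs_sub_comm]; exact le_abs_self _
  have hin : ∑ s ∈ A, (Q s - 1 / #U) ≤ ∑ s ∈ A, |Q s - 1 / #U| :=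
    sum_le_sum fun s _ => le_abs_self _
  rw [← sum_sdiff hA] at hQ ⊢
  rw [sum_sub_distrib, sum_const, card_sdiff_of_subset hA, nsmul_eq_mul,
    Nat.cast_sub (card_le_card hA)] at hout
  rw [sum_sub_distrib, sum_const, nsmul_eq_mul, mul_one_div] at hin
  have : ((#U : ℝ) - #A) * (1 / #U) = 1 - #A / #U := by field_simp
  linarith

def residues (n p : ℕ) (T : Finset (Finset ℕ)) : Finset ℕ :=
  T.image fun S => (cdgX n (bitPath S) : ZMod p).val

lemma residues_subset_range (n p : ℕ) [NeZero p] (T : Finset (Finset ℕ)) :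
    residues n p T ⊆ range p := by
  intro s hs
  obtain ⟨S, -, rfl⟩ := mem_image.1 hs
  exact mem_range.2 (ZMod.val_lt _)

variable {ν : Measure (ℕ → ℤ)}

lemma sum_measureReal_residueSet_le_one (hν : IsBiasedProductMeasure ν) (n p : ℕ) :
    ∑ s ∈ range p, ν.real (residueSet n p s) ≤ 1 := by
  have := hν.isProbabilityMeasure
  rw [← measureReal_biUnion_finset (pairwiseDisjoint_residueSet n p)
    fun s _ => measurableSet_residueSet n p s]
  exact measureReal_le_one

lemma sum_binomialWeight_le_sum_measureReal_residueSet (hν : IsBiasedProductMeasure ν)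
    {n p : ℕ} [NeZero p] {T : Finset (Finset ℕ)} (hT : T ⊆ (range n).powerset) :
    ∑ S ∈ T, binomialWeight (2 / 5) n S ≤ ∑ s ∈ residues n p T, ν.real (residueSet n p s) := by
  have := hν.isProbabilityMeasure
  rw [← measureReal_biUnion_finset
      ((pairwiseDisjoint_residueSet n p).subset (coe_subset.2 (residues_subset_range n p T)))
      fun s _ => measurableSet_residueSet n p s,
    ← sum_congr rfl fun S hS => hν.measureReal_bitCylinder (mem_powerset.1 (hT hS)),
    ← measureReal_biUnion_finset ((pairwiseDisjoint_bitCylinder n).subset (coe_subset.2 hT))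
      fun S _ => measurableSet_bitCylinder n S]
  refine measureReal_mono (Set.iUnion₂_subset fun S hS ω hω => ?_) (measure_ne_top _ _)
  refine Set.mem_biUnion (mem_image_of_mem _ hS) ?_
  simp [residueSet, cdgX_eq_of_mem_bitCylinder hω]

lemma sum_binomialWeight_sub_card_div_le_cdgTV (hν : IsBiasedProductMeasure ν) {n p : ℕ}
    (hp : 0 < p) {T : Finset (Finset ℕ)} (hT : T ⊆ (range n).powerset) :
    ∑ S ∈ T, binomialWeight (2 / 5) n S - #T / p ≤ cdgTV ν n p := by
  have : NeZero p := ⟨hp.ne'⟩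
  have hTV := sum_sub_card_div_le_half_sum_abs_sub (range p) (residues n p T)
    (fun s => ν.real (residueSet n p s)) (sum_measureReal_residueSet_le_one hν n p)
    (residues_subset_range n p T)
  rw [card_range] at hTV
  have hcard : (#(residues n p T) : ℝ) / p ≤ #T / p := by gcongr; exact card_image_le
  linarith [sum_binomialWeight_le_sum_measureReal_residueSet hν (p := p) hT,
    show cdgTV ν n p = 1 / 2 * ∑ s ∈ range p, |ν.real (residueSet n p s) - 1 / p| from rfl]

/-- Chernoff rates for the threshold `9 / 20`, which lies strictly between the bias `2 / 5` and
`1 / 2`: the parameters `t = 27 / 22` and `s = 11 / 9` are the optimal ones, and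
`log₂ countRate ≈ 0.993 < 1`. -/
def tailRate : ℝ := (12 / 11) / (27 / 22) ^ (9 / 20 : ℝ)

def countRate : ℝ := (11 / 9) ^ (9 / 20 : ℝ) * (20 / 11)

def typicalSets (n : ℕ) : Finset (Finset ℕ) := {S ∈ (range n).powerset | (#S : ℝ) ≤ 9 / 20 * n}

lemma tailRate_pos : 0 < tailRate := by unfold tailRate; positivity

lemma tailRate_lt_one : tailRate < 1 := by
  have h : tailRate ^ 20 = (12 / 11) ^ 20 / (27 / 22) ^ 9 := by
    rw [tailRate, div_pow, ← Real.rpow_natCast ((27 / 22 : ℝ) ^ (9 / 20 : ℝ)),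
      ← Real.rpow_mul (by norm_num)]
    norm_num
  refine (pow_lt_one_iff_of_nonneg tailRate_pos.le (by norm_num : 20 ≠ 0)).1 ?_
  rw [h]
  norm_num

lemma one_le_countRate : 1 ≤ countRate := by
  have : (1 : ℝ) ≤ (11 / 9) ^ (9 / 20 : ℝ) := Real.one_le_rpow (by norm_num) (by norm_num)
  unfold countRate
  nlinarith

lemma logb_countRate_lt : Real.logb 2 countRate < 200 / 201 := by
  have h₀ : 0 < countRate := by linarith [one_le_countRate]
  rw [Real.logb_lt_iff_lt_rpow one_lt_two h₀]
  refine lt_of_pow_lt_pow_left₀ 4020 (by positivity) ?_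
  rw [← Real.rpow_natCast (2 ^ (200 / 201 : ℝ)), ← Real.rpow_mul zero_le_two, countRate, mul_pow,
    ← Real.rpow_natCast ((11 / 9 : ℝ) ^ (9 / 20 : ℝ)), ← Real.rpow_mul (by norm_num)]
  norm_num
  rw [div_pow, div_pow, div_mul_div_comm, div_lt_iff₀ (by positivity)]
  have h : (11 : ℝ) ^ (1809 : ℕ) * 20 ^ (4020 : ℕ) <
      2 ^ (4000 : ℕ) * (9 ^ (1809 : ℕ) * 11 ^ (4020 : ℕ)) := by
    exact_mod_cast (by decide +kernel :
      (11 : ℕ) ^ 1809 * 20 ^ 4020 < 2 ^ 4000 * (9 ^ 1809 * 11 ^ 4020))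
  exact h

lemma one_sub_tailRate_pow_le_sum_typicalSets (n : ℕ) :
    1 - tailRate ^ n ≤ ∑ S ∈ typicalSets n, binomialWeight (2 / 5) n S := by
  have htail := sum_binomialWeight_filter_lt_le (q := 2 / 5) (t := 27 / 22) (by norm_num)
    (by norm_num) (by norm_num) n (9 / 20 * n)
  have hrate : (2 / 5 * (27 / 22) + (1 - 2 / 5) : ℝ) ^ n / (27 / 22) ^ (9 / 20 * n : ℝ) =
      tailRate ^ n := by
    rw [tailRate, div_pow, ← Real.rpow_natCast ((27 / 22 : ℝ) ^ (9 / 20 : ℝ)),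
      ← Real.rpow_mul (by norm_num)]
    norm_num
  have hsplit := sum_filter_add_sum_filter_not (range n).powerset
    (fun S : Finset ℕ => (#S : ℝ) ≤ 9 / 20 * n) (binomialWeight (2 / 5) n)
  simp only [not_le, sum_binomialWeight] at hsplit
  rw [typicalSets]
  linarith

lemma card_typicalSets_le (n : ℕ) : (#(typicalSets n) : ℝ) ≤ countRate ^ n := by
  refine (card_filter_card_le_le (s := 11 / 9) (by norm_num) n (9 / 20 * n)).trans_eq ?_
  rw [countRate, mul_pow, ← Real.rpow_natCast ((11 / 9 : ℝ) ^ (9 / 20 : ℝ)),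
    ← Real.rpow_mul (by norm_num)]
  norm_num

lemma pow_le_rpow_mul_logb {B c p : ℝ} {n : ℕ} (hB : 1 ≤ B) (hp : 0 < p)
    (hn : (n : ℝ) ≤ c * Real.logb 2 p) : B ^ n ≤ p ^ (c * Real.logb 2 B) := by
  calc B ^ n = B ^ (n : ℝ) := (Real.rpow_natCast B n).symm
    _ ≤ B ^ (c * Real.logb 2 p) := Real.rpow_le_rpow_of_exponent_le hB hn
    _ = (2 ^ Real.logb 2 B) ^ (c * Real.logb 2 p) := by
      rw [Real.rpow_logb two_pos one_lt_two.ne' (by linarith)]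
    _ = (2 ^ Real.logb 2 p) ^ (c * Real.logb 2 B) := by
      rw [← Real.rpow_mul zero_le_two, ← Real.rpow_mul zero_le_two]
      ring_nf
    _ = p ^ (c * Real.logb 2 B) := by rw [Real.rpow_logb two_pos one_lt_two.ne' hp]

lemma one_sub_tailRate_pow_sub_le_cdgTV (hν : IsBiasedProductMeasure ν) (n : ℕ) {p : ℕ}
    (hp : 0 < p) : 1 - tailRate ^ n - countRate ^ n / p ≤ cdgTV ν n p := by
  have hTV : ∑ S ∈ typicalSets n, binomialWeight (2 / 5) n S - #(typicalSets n) / p ≤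
      cdgTV ν n p := sum_binomialWeight_sub_card_div_le_cdgTV hν hp (filter_subset _ _)
  have hcard : (#(typicalSets n) : ℝ) / p ≤ countRate ^ n / p := by
    gcongr
    exact card_typicalSets_le n
  linarith [one_sub_tailRate_pow_le_sum_typicalSets n]

lemma one_sub_two_pow_div_le_cdgTV (hν : IsBiasedProductMeasure ν) (n : ℕ) {p : ℕ}
    (hp : 0 < p) : 1 - 2 ^ n / p ≤ cdgTV ν n p := by
  simpa [sum_binomialWeight, card_powerset] using
    sum_binomialWeight_sub_card_div_le_cdgTV hν hp (subset_refl (range n).powerset)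

end

/-- there is a constant `c₂ > 1` such that whenever `n : ℕ → ℕ` satisfies
`n p < c₂ · log₂ p` for all odd `p ≥ 3`, the total variation distance
`‖Q_{n(p),p} − U‖ → 1` as `p → ∞` along odd integers: for every `δ > 0` there is `P₀`
such that `‖Q_{n(p),p} − U‖ > 1 − δ` for every odd `p ≥ max(P₀, 3)`. -/
theorem stmt_1 (ν : Measure (ℕ → ℤ)) (hν : IsBiasedProductMeasure ν) :
    ∃ c₂ : ℝ, 1 < c₂ ∧
      ∀ n : ℕ → ℕ, (∀ p : ℕ, 3 ≤ p → Odd p → (n p : ℝ) < c₂ * Real.logb 2 p) →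
        ∀ δ : ℝ, 0 < δ → ∃ P₀ : ℕ, ∀ p : ℕ, P₀ ≤ p → 3 ≤ p → Odd p →
          1 - δ < cdgTV ν (n p) p := by
  refine ⟨201 / 200, by norm_num, fun n hn δ hδ => ?_⟩
  have hθ : 201 / 200 * Real.logb 2 countRate < 1 := by linarith [logb_countRate_lt]
  set θ := 201 / 200 * Real.logb 2 countRate
  obtain ⟨N, hN⟩ : ∃ N : ℕ, tailRate ^ N < δ / 2 :=
    exists_pow_lt_of_lt_one (by linarith) tailRate_lt_one
  have hcount : ∀ᶠ p : ℕ in Filter.atTop, (p : ℝ) ^ (θ - 1) < δ / 2 :=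
    ((tendsto_rpow_neg_atTop (by linarith : 0 < 1 - θ)).comp tendsto_natCast_atTop_atTop
      |>.eventually_lt_const (by linarith : (0 : ℝ) < δ / 2)).mono fun p hp => by simpa using hp
  have hsmall : ∀ᶠ p : ℕ in Filter.atTop, (2 : ℝ) ^ N / p < δ :=
    (tendsto_const_div_atTop_nhds_zero_nat _).eventually_lt_const hδ
  obtain ⟨P₀, hP₀⟩ := Filter.eventually_atTop.1 (hcount.and hsmall)
  refine ⟨P₀, fun p hpP hp3 hodd => ?_⟩
  obtain ⟨hcount, hsmall⟩ := hP₀ p hpP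
  have hp : 0 < p := by omega
  have hp' : (0 : ℝ) < p := Nat.cast_pos.2 hp
  rcases le_or_gt (n p) N with hnN | hnN
  · have : (2 : ℝ) ^ n p / p ≤ 2 ^ N / p := by gcongr; norm_num
    linarith [one_sub_two_pow_div_le_cdgTV hν (n p) hp]
  · have hB : countRate ^ n p / p ≤ (p : ℝ) ^ (θ - 1) := by
      rw [Real.rpow_sub_one hp'.ne', div_le_div_iff_of_pos_right hp']
      exact pow_le_rpow_mul_logb one_le_countRate hp' (hn p hp3 hodd).le
    have htail : tailRate ^ n p ≤ tailRate ^ N :=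
      pow_le_pow_of_le_one tailRate_pos.le tailRate_lt_one.le hnN.le
    linarith [one_sub_tailRate_pow_sub_le_cdgTV hν (n p) hp]
end

section
/- Suppose the sequence b is in the case 'first 1' for length n. Then there is no a ∈ {1, …, n−1} such that b̃_{a-1} = 1, b̃_a = 1, b_{a-1} = 1, and b_a ≠ 1. Equivalently, the number n₂ of such a is zero. -/
/-- `S = ∑_{i=0}^{n-1} 2^(n-1-i) b i`. -/
def cdgS (n : ℕ) (b : ℕ → ℤ) : ℤ := ∑ i ∈ Finset.range n, 2 ^ (n - 1 - i) * b i

/-- The standard form `b̃ a` of the sequence `b` for length `n`: the binary digit of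
`S = ∑_{i<n} 2^(n-1-i) b i` in position `n-1-a`, so that (in the "first 1" case, where
`1 ≤ S ≤ 2^n − 1`) one has `S = ∑_{a<n} 2^(n-1-a) b̃ a` with each `b̃ a ∈ {0,1}`. -/
def btilde (n : ℕ) (b : ℕ → ℤ) (a : ℕ) : ℕ := (cdgS n b).toNat / 2 ^ (n - 1 - a) % 2

/-!
Let `m = n - 1 - a`. The digits `b̃_{a-1}` and `b̃_a` of `S` are its binary digits in positions
`m + 1` and `m`, so both are `1` exactly when `⌊S / 2^m⌋ ≡ 3 (mod 4)`. Splitting the sum defining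
`S` at positions `a - 1` and `a` gives `S = 2^m (4 S' + 2 b_{a-1} + b_a) + R`, where `S'` is the
value of the first `a - 1` terms and `|R| < 2^m` (a balanced binary number with `m` digits).
With `b_{a-1} = 1` and `b_a ∈ {-1, 0}`, `⌊S / 2^m⌋` is `4 S' + 2 + b_a` or one less, hence `0`, `1`
or `2` mod 4.
-/

lemma cdgS_zero (b : ℕ → ℤ) : cdgS 0 b = 0 := rfl

lemma cdgS_succ (n : ℕ) (b : ℕ → ℤ) : cdgS (n + 1) b = 2 * cdgS n b + b n := by
  simp only [cdgS, Finset.sum_range_succ, Nat.add_sub_cancel, Nat.sub_self, pow_zero, one_mul,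
    Finset.mul_sum, ← mul_assoc, ← pow_succ']
  congr 1
  refine Finset.sum_congr rfl fun i hi => ?_
  rw [Finset.mem_range] at hi
  congr 2
  omega

lemma cdgS_add (k l : ℕ) (b : ℕ → ℤ) :
    cdgS (k + l) b = 2 ^ l * cdgS k b + cdgS l (fun j => b (k + j)) := by
  induction l with
  | zero => simp [cdgS_zero]
  | succ l ih =>
    rw [← add_assoc, cdgS_succ, ih, cdgS_succ]
    ring

lemma abs_cdgS_le {b : ℕ → ℤ} (hb : ∀ i, |b i| ≤ 1) (n : ℕ) : |cdgS n b| ≤ 2 ^ n - 1 := by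
  induction n with
  | zero => simp [cdgS_zero]
  | succ n ih =>
    rw [cdgS_succ, pow_succ]
    calc |2 * cdgS n b + b n| ≤ 2 * |cdgS n b| + |b n| := by
          simpa [abs_mul] using abs_add_le (2 * cdgS n b) (b n)
      _ ≤ 2 ^ n * 2 - 1 := by linarith [hb n]

lemma ediv_two_pow_emod_four_of_toNat_digits {S : ℤ} {m : ℕ}
    (h₁ : S.toNat / 2 ^ (m + 1) % 2 = 1) (h₀ : S.toNat / 2 ^ m % 2 = 1) :
    S / 2 ^ m % 4 = 3 := by
  have hS : 0 ≤ S := by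
    by_contra! hneg
    simp [Int.toNat_of_nonpos hneg.le] at h₀
  rw [pow_succ, ← Nat.div_div_eq_div_mul] at h₁
  have h : S.toNat / 2 ^ m % 4 = 3 := by omega
  rw [← Int.toNat_of_nonneg hS]
  exact_mod_cast h

lemma cdgS_ediv_two_pow_emod_four_ne_three {b : ℕ → ℤ} (hb : ∀ i, |b i| ≤ 1) {p : ℕ}
    (hp : b p = 1) (hp' : b (p + 1) ≤ 0) (m : ℕ) :
    cdgS (p + 2 + m) b / 2 ^ m % 4 ≠ 3 := by
  set X := 4 * cdgS p b + 2 + b (p + 1)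
  set R := cdgS m (fun j => b (p + 2 + j))
  have hsplit : cdgS (p + 2 + m) b = 2 ^ m * X + R := by
    rw [cdgS_add, show p + 2 = p + 1 + 1 from rfl, cdgS_succ, cdgS_succ, hp]
    ring
  have hR : |R| ≤ 2 ^ m - 1 := abs_cdgS_le (fun j => hb _) m
  have hpow : (0 : ℤ) < 2 ^ m := by positivity
  have hlow : X - 1 ≤ cdgS (p + 2 + m) b / 2 ^ m := by
    rw [Int.le_ediv_iff_mul_le hpow, hsplit]
    linarith [neg_abs_le R]
  have hhigh : cdgS (p + 2 + m) b / 2 ^ m < X + 1 := by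
    rw [Int.ediv_lt_iff_lt_mul hpow, hsplit]
    linarith [le_abs_self R]
  have hbp' : -1 ≤ b (p + 1) := (abs_le.mp (hb (p + 1))).1
  omega

theorem stmt_6_general (n : ℕ) (b : ℕ → ℤ)
    (hb : ∀ i, b i = -1 ∨ b i = 0 ∨ b i = 1) :
    (¬∃ a, 1 ≤ a ∧ a < n ∧
        btilde n b (a - 1) = 1 ∧ btilde n b a = 1 ∧ b (a - 1) = 1 ∧ b a ≠ 1) ∧
    ((Finset.Ico 1 n).filter (fun a =>
        btilde n b (a - 1) = 1 ∧ btilde n b a = 1 ∧ b (a - 1) = 1 ∧ b a ≠ 1)).card = 0 := by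
  have hb_abs : ∀ i, |b i| ≤ 1 := fun i => by
    rcases hb i with h | h | h <;> simp [h]
  have key : ¬∃ a, 1 ≤ a ∧ a < n ∧
      btilde n b (a - 1) = 1 ∧ btilde n b a = 1 ∧ b (a - 1) = 1 ∧ b a ≠ 1 := by
    rintro ⟨a, ha, han, hd₁, hd₀, hp, hne⟩
    obtain ⟨p, rfl⟩ : ∃ p, a = p + 1 := ⟨a - 1, by omega⟩
    obtain ⟨m, rfl⟩ : ∃ m, n = p + 2 + m := ⟨n - (p + 2), by omega⟩
    rw [btilde, show p + 2 + m - 1 - (p + 1 - 1) = m + 1 by omega] at hd₁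
    rw [btilde, show p + 2 + m - 1 - (p + 1) = m by omega] at hd₀
    rw [Nat.add_sub_cancel] at hp
    have hle : b (p + 1) ≤ 0 := by rcases hb (p + 1) with h | h | h <;> omega
    exact cdgS_ediv_two_pow_emod_four_ne_three hb_abs hp hle m
      (ediv_two_pow_emod_four_of_toNat_digits hd₁ hd₀)
  refine ⟨key, Finset.card_eq_zero.mpr (Finset.filter_eq_empty_iff.mpr ?_)⟩
  intro a ha hbad
  rw [Finset.mem_Ico] at ha
  exact key ⟨a, ha.1, ha.2, hbad⟩

/-- if the sequence `b` (with values in `{-1,0,1}`) is in the case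
"first 1" for length `n ≥ 1`, then there is no `a ∈ {1,…,n−1}` with `b̃_{a-1} = 1`,
`b̃_a = 1`, `b_{a-1} = 1` and `b_a ≠ 1`; equivalently, the number `n₂` of such `a`
is zero. -/
theorem stmt_6 (n : ℕ) (hn : 1 ≤ n) (b : ℕ → ℤ)
    (hb : ∀ i, b i = -1 ∨ b i = 0 ∨ b i = 1)
    (hfirst : ∃ j < n, b j = 1 ∧ ∀ k < j, b k = 0) :
    (¬∃ a, 1 ≤ a ∧ a < n ∧
        btilde n b (a - 1) = 1 ∧ btilde n b a = 1 ∧ b (a - 1) = 1 ∧ b a ≠ 1) ∧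
    ((Finset.Ico 1 n).filter (fun a =>
        btilde n b (a - 1) = 1 ∧ btilde n b a = 1 ∧ b (a - 1) = 1 ∧ b a ≠ 1)).card = 0 :=
  stmt_6_general n b hb
end
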